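/- arXiv:1608.08660 — 3 statements merged into one kernel-verified Lean document; each statement's English description precedes it below -/
import Mathlib

section
/- In the partition-reduction graph, a solution to the restricted-weight survivability problem with bounds B = T/2 (on CT-weight) and S = e^{−T/2} (on survivability) whose common links are all top links exists if and only if the Partition instance has a solution, where T = ∑_{a∈A} s(a). -/
/-- The partition-reduction chain graph has, between consecutive nodes `aᵢ`,
`aᵢ₊₁`, a top edge (weight `0`, failure probability `1 - e^{-s i}`) and a bottom
edge (weight `s i`, failure probability `M` with `p_max < M < 1`).  An `s`-`t`
path is determined by a choice function `c : Fin k → Bool` (`true` = top edge).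
A solution to the restricted-weight survivability problem with bounds
`B = T/2` on CT-weight and `S = e^{-T/2}` on survivability whose common links
are all top links exists iff the Partition instance has a solution. -/
theorem partition_reduction_correctness
    (k : ℕ) (s : Fin k → ℕ) (hs : ∀ i, 0 < s i)
    (M pmax : ℝ) (hpmax : 0 < pmax) (hMl : pmax < M) (hMu : M < 1)
    (T : ℝ) (hT : T = ∑ i : Fin k, (s i : ℝ)) :
    (∃ c₁ c₂ : Fin k → Bool,
      (∀ i, c₁ i = c₂ i → c₁ i = true) ∧
      Real.exp (-(T / 2)) ≤
        ∏ i ∈ Finset.univ.filter (fun i => c₁ i = c₂ i),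
          (1 - (if c₁ i = true then 1 - Real.exp (-(s i : ℝ)) else M)) ∧
      (∑ i : Fin k, (if c₁ i = true then (0 : ℝ) else (s i : ℝ))) +
        (∑ i : Fin k, (if c₂ i = true then (0 : ℝ) else (s i : ℝ))) ≤ T / 2)
    ↔ ∃ A : Finset (Fin k), ∑ i ∈ A, (s i : ℝ) = ∑ i ∈ Aᶜ, (s i : ℝ) := by
  constructor
  · rintro ⟨c₁, c₂, h₁, h₂, h₃⟩
    set F := Finset.univ.filter (fun i => c₁ i = c₂ i) with hF
    refine ⟨F, ?_⟩
    have hprod : ∏ i ∈ F, (1 - (if c₁ i = true then 1 - Real.exp (-(s i : ℝ)) else M))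
        = Real.exp (-∑ i ∈ F, (s i : ℝ)) := by
      rw [← Finset.sum_neg_distrib, Real.exp_sum]
      refine Finset.prod_congr rfl fun i hi => ?_
      have hc : c₁ i = true := h₁ i (by simpa [hF] using hi)
      rw [if_pos hc]; ring
    rw [hprod, Real.exp_le_exp, neg_le_neg_iff] at h₂
    -- h₂ : ∑ i ∈ F, s i ≤ T / 2
    have hw : (∑ i : Fin k, (if c₁ i = true then (0 : ℝ) else (s i : ℝ))) +
        (∑ i : Fin k, (if c₂ i = true then (0 : ℝ) else (s i : ℝ)))
        = ∑ i ∈ Fᶜ, (s i : ℝ) := by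
      rw [← Finset.sum_add_distrib]
      have hsplit := Finset.sum_add_sum_compl F
        (fun i => (if c₁ i = true then (0 : ℝ) else (s i : ℝ)) +
          (if c₂ i = true then (0 : ℝ) else (s i : ℝ)))
      rw [← hsplit]
      have hzero : ∑ i ∈ F, ((if c₁ i = true then (0 : ℝ) else (s i : ℝ)) +
          (if c₂ i = true then (0 : ℝ) else (s i : ℝ))) = 0 := by
        refine Finset.sum_eq_zero fun i hi => ?_
        have hc₁ : c₁ i = true := h₁ i (by simpa [hF] using hi)
        have hc₂ : c₂ i = true := by
          have : c₁ i = c₂ i := by simpa [hF] using hi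
          rw [← this, hc₁]
        rw [if_pos hc₁, if_pos hc₂]; ring
      rw [hzero, zero_add]
      refine Finset.sum_congr rfl fun i hi => ?_
      have hne : c₁ i ≠ c₂ i := by
        simp only [hF, Finset.mem_compl, Finset.mem_filter, Finset.mem_univ,
          true_and] at hi
        exact hi
      cases hb₁ : c₁ i <;> cases hb₂ : c₂ i <;>
        simp_all
    rw [hw] at h₃
    have htot : (∑ i ∈ F, (s i : ℝ)) + ∑ i ∈ Fᶜ, (s i : ℝ) = T := by
      rw [hT]; exact Finset.sum_add_sum_compl F _
    linarith
  · rintro ⟨A, hA⟩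
    have htot : (∑ i ∈ A, (s i : ℝ)) + ∑ i ∈ Aᶜ, (s i : ℝ) = T := by
      rw [hT]; exact Finset.sum_add_sum_compl A _
    have hhalf : ∑ i ∈ A, (s i : ℝ) = T / 2 := by linarith
    refine ⟨fun _ => true, fun i => decide (i ∈ A), fun i _ => rfl, ?_, ?_⟩
    · have hfilter : Finset.univ.filter (fun i => true = decide (i ∈ A)) = A := by
        ext i; simp [eq_comm]
      rw [hfilter]
      have : ∏ i ∈ A, (1 - (if (true : Bool) = true then 1 - Real.exp (-(s i : ℝ)) else M))
          = Real.exp (-(T / 2)) := by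
        rw [← hhalf, ← Finset.sum_neg_distrib, Real.exp_sum]
        refine Finset.prod_congr rfl fun i _ => ?_
        rw [if_pos rfl]; ring
      rw [this]
    · have h0 : (∑ i : Fin k, (if (true : Bool) = true then (0 : ℝ) else (s i : ℝ))) = 0 := by
        simp
      have h2 : (∑ i : Fin k, (if decide (i ∈ A) = true then (0 : ℝ) else (s i : ℝ)))
          = ∑ i ∈ Aᶜ, (s i : ℝ) := by
        rw [← Finset.sum_add_sum_compl A
          (fun i => (if decide (i ∈ A) = true then (0 : ℝ) else (s i : ℝ)))]
        have hz : ∑ i ∈ A, (if decide (i ∈ A) = true then (0 : ℝ) else (s i : ℝ)) = 0 := by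
          refine Finset.sum_eq_zero fun i hi => ?_
          simp [hi]
        rw [hz, zero_add]
        refine Finset.sum_congr rfl fun i hi => ?_
        simp only [Finset.mem_compl] at hi
        simp [hi]
      rw [h0, h2, zero_add]
      linarith
end

section
/- If (π₁,π₂) is an optimal solution of the CT-Constrained QoS Max-Survivability problem with QoS bound B, then every critical link (edge common to both paths) lies on every weight-shortest path from s to t. -/
/-!
Suppose a critical link `e` of an optimal connection `(π₁, π₂)` misses a shortest path `σ`.
Shortcutting cycles, we may assume that `π₁ = L₁ e R₁` and `π₂ = L₂ e R₂` repeat no edge. Cut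
`σ = S M T` so that every edge of `M` lies on both or on neither of `π₁`, `π₂`, while `S` is
empty or ends on some `Lᵢ`, say `L₁`, and `T` is empty or starts on some `Rⱼ`. Follow `π₁` to the
end of `S`, then `M`, then `Rⱼ` from the start of `T`; let the other path cross over at `e`. As
`M` is itself a shortest path, the new connection is no heavier, and as the paths repeat no edge,
its critical links are critical links of `(π₁, π₂)` other than `e`. So its survivability is
strictly larger, contradicting optimality.
-/

/-- A path from `s` to `t`, represented as a list of directed edges chained
from `s` to `t`. -/
def IsPathFrom {V : Type*} (s t : V) : List (V × V) → Prop
  | [] => s = t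
  | (a, b) :: rest => a = s ∧ IsPathFrom b t rest

namespace List

variable {α : Type*}

theorem exists_eq_append_of_first (p : α → Prop) (l : List α) :
    ∃ L T, l = L ++ T ∧ (∀ x ∈ L, ¬p x) ∧ (T = [] ∨ ∃ z T', T = z :: T' ∧ p z) := by
  induction l with
  | nil => exact ⟨[], [], rfl, by simp, Or.inl rfl⟩
  | cons a l ih =>
    by_cases ha : p a
    · exact ⟨[], a :: l, rfl, by simp, Or.inr ⟨a, l, rfl, ha⟩⟩
    · obtain ⟨L, T, rfl, hL, hT⟩ := ih
      exact ⟨a :: L, T, rfl, by simpa [ha] using hL, hT⟩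

theorem exists_eq_append_of_last (p : α → Prop) (l : List α) :
    ∃ S M, l = S ++ M ∧ (∀ x ∈ M, ¬p x) ∧ (S = [] ∨ ∃ S' y, S = S' ++ [y] ∧ p y) := by
  obtain ⟨L, T, hl, hL, hT⟩ := exists_eq_append_of_first p l.reverse
  refine ⟨T.reverse, L.reverse, by simpa using congrArg reverse hl, by simpa using hL, ?_⟩
  rcases hT with rfl | ⟨z, T', rfl, hz⟩
  · exact Or.inl rfl
  · exact Or.inr ⟨T'.reverse, z, by simp, hz⟩

/-- Each piece of `P ++ M ++ R` sits on a different side of `e` than each piece of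
`L₂ ++ e :: Rq`: two sides of one path are disjoint, sides of different paths meet only in
common elements, and `M` is balanced. -/
theorem common_of_exchange {e : α} {L₁ R₁ L₂ R₂ P M R Rp Rq : List α}
    (hnd₁ : (L₁ ++ e :: R₁).Nodup) (hnd₂ : (L₂ ++ e :: R₂).Nodup) (heM : e ∉ M)
    (hbal : ∀ x ∈ M, x ∈ L₁ ++ e :: R₁ ↔ x ∈ L₂ ++ e :: R₂)
    (hR : Rp = R₁ ∧ Rq = R₂ ∨ Rp = R₂ ∧ Rq = R₁) (hP : P ⊆ L₁) (hRsub : R ⊆ Rp) :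
    ∀ x ∈ P ++ M ++ R, x ∈ L₂ ++ e :: Rq →
      x ∈ L₁ ++ e :: R₁ ∧ x ∈ L₂ ++ e :: R₂ ∧ x ≠ e := by
  obtain ⟨he₁, hnd₁'⟩ := nodup_cons.1 (nodup_middle.1 hnd₁)
  obtain ⟨he₂, hnd₂'⟩ := nodup_cons.1 (nodup_middle.1 hnd₂)
  intro x hx₁ hx₂
  have hbalx := fun h => hbal x h
  have hPx := @hP x
  have hRx := @hRsub x
  have hd₁ : x ∈ L₁ → x ∉ R₁ := fun h h' => hnd₁'.disjoint h h'
  have hd₂ : x ∈ L₂ → x ∉ R₂ := fun h h' => hnd₂'.disjoint h h'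
  rcases hR with ⟨rfl, rfl⟩ | ⟨rfl, rfl⟩ <;>
  · simp only [List.mem_append, List.mem_cons] at hx₁ hx₂ hbalx hd₁ hd₂ he₁ he₂ heM ⊢
    grind

end List

section Paths

variable {V : Type*}

theorem isPathFrom_nil {s t : V} : IsPathFrom s t [] ↔ s = t := Iff.rfl

theorem isPathFrom_cons {s t : V} {x : V × V} {l : List (V × V)} :
    IsPathFrom s t (x :: l) ↔ x.1 = s ∧ IsPathFrom x.2 t l := by
  cases x; rfl

theorem isPathFrom_append {s t : V} {l₁ l₂ : List (V × V)} :
    IsPathFrom s t (l₁ ++ l₂) ↔ ∃ m, IsPathFrom s m l₁ ∧ IsPathFrom m t l₂ := by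
  induction l₁ generalizing s with
  | nil => simp [isPathFrom_nil]
  | cons x l₁ ih => simp [isPathFrom_cons, ih, and_assoc]

theorem isPathFrom_append_cons {s t : V} {l₁ l₂ : List (V × V)} {x : V × V} :
    IsPathFrom s t (l₁ ++ x :: l₂) ↔ IsPathFrom s x.1 l₁ ∧ IsPathFrom x.2 t l₂ := by
  simp [isPathFrom_append, isPathFrom_cons]

namespace IsPathFrom

variable {s t a b : V} {l l₁ l₂ : List (V × V)}

theorem source_unique (ha : IsPathFrom a t l) (hb : IsPathFrom b t l) : a = b := by
  cases l with
  | nil => exact ha.trans hb.symm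
  | cons x l => exact (isPathFrom_cons.1 ha).1.symm.trans (isPathFrom_cons.1 hb).1

theorem target_unique (ha : IsPathFrom s a l) (hb : IsPathFrom s b l) : a = b := by
  induction l generalizing s with
  | nil => exact ha.symm.trans hb
  | cons x l ih => exact ih (isPathFrom_cons.1 ha).2 (isPathFrom_cons.1 hb).2

theorem of_append_right (h : IsPathFrom s t (l₁ ++ l₂)) (h₁ : IsPathFrom s a l₁) :
    IsPathFrom a t l₂ := by
  obtain ⟨m, h₁', h₂⟩ := isPathFrom_append.1 h
  rwa [h₁.target_unique h₁']

theorem of_append_left (h : IsPathFrom s t (l₁ ++ l₂)) (h₂ : IsPathFrom b t l₂) :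
    IsPathFrom s b l₁ := by
  obtain ⟨m, h₁, h₂'⟩ := isPathFrom_append.1 h
  rwa [h₂.source_unique h₂']

theorem exists_nodup_sublist (h : IsPathFrom s t l) :
    ∃ l', l'.Sublist l ∧ l'.Nodup ∧ IsPathFrom s t l' := by
  induction l generalizing s with
  | nil => exact ⟨[], .slnil, .nil, h⟩
  | cons x l ih =>
    obtain ⟨hx, hl⟩ := isPathFrom_cons.1 h
    obtain ⟨l', hsub, hnd, hl'⟩ := ih hl
    by_cases hxl' : x ∈ l'
    · obtain ⟨P, Q, rfl⟩ := List.append_of_mem hxl'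
      exact ⟨x :: Q, (List.sublist_append_right P _).trans (hsub.trans (l.sublist_cons_self x)),
        hnd.sublist (List.sublist_append_right P _),
        isPathFrom_cons.2 ⟨hx, (isPathFrom_append_cons.1 hl').2⟩⟩
    · exact ⟨x :: l', hsub.cons_cons x, List.nodup_cons.2 ⟨hxl', hnd⟩, isPathFrom_cons.2 ⟨hx, hl'⟩⟩

theorem exists_prefix_to (h : IsPathFrom s t l) (ha : a = s ∨ ∃ y ∈ l, y.2 = a) :
    ∃ P Q, l = P ++ Q ∧ IsPathFrom s a P := by
  rcases ha with rfl | ⟨y, hy, rfl⟩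
  · exact ⟨[], l, rfl, rfl⟩
  · obtain ⟨P, Q, rfl⟩ := List.append_of_mem hy
    exact ⟨P ++ [y], Q, by simp, isPathFrom_append_cons.2 ⟨(isPathFrom_append_cons.1 h).1, rfl⟩⟩

theorem exists_suffix_from (h : IsPathFrom s t l) (hb : b = t ∨ ∃ z ∈ l, z.1 = b) :
    ∃ Q R, l = Q ++ R ∧ IsPathFrom b t R := by
  rcases hb with rfl | ⟨z, hz, rfl⟩
  · exact ⟨l, [], by simp, rfl⟩
  · obtain ⟨Q, R, rfl⟩ := List.append_of_mem hz
    exact ⟨Q, z :: R, rfl, isPathFrom_cons.2 ⟨rfl, (isPathFrom_append_cons.1 h).2⟩⟩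

end IsPathFrom

def IsShortestPath (E : Set (V × V)) (w : V × V → ℝ) (s t : V) (σ : List (V × V)) : Prop :=
  IsPathFrom s t σ ∧ (∀ x ∈ σ, x ∈ E) ∧
    ∀ τ, IsPathFrom s t τ → (∀ x ∈ τ, x ∈ E) → (σ.map w).sum ≤ (τ.map w).sum

theorem IsShortestPath.infix {E : Set (V × V)} {w : V × V → ℝ} {s t a b : V}
    {S M T : List (V × V)} (hσ : IsShortestPath E w s t (S ++ M ++ T))
    (hS : IsPathFrom s a S) (hT : IsPathFrom b t T) : IsShortestPath E w a b M := by
  obtain ⟨hpath, hE, hmin⟩ := hσ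
  refine ⟨(hpath.of_append_left hT).of_append_right hS, fun x hx => hE x (by simp [hx]), ?_⟩
  intro X hX hXE
  have := hmin (S ++ X ++ T)
    (isPathFrom_append.2 ⟨b, isPathFrom_append.2 ⟨a, hS, hX⟩, hT⟩)
    (fun x hx => by
      simp only [List.mem_append] at hx
      rcases hx with (hx | hx) | hx
      exacts [hE x (by simp [hx]), hXE x hx, hE x (by simp [hx])])
  simp only [List.map_append, List.sum_append] at this
  linarith

def CanShedLink (E : Set (V × V)) (w : V × V → ℝ) (s t : V) (e : V × V)
    (π₁ π₂ : List (V × V)) : Prop :=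
  ∃ τ₁ τ₂, IsPathFrom s t τ₁ ∧ IsPathFrom s t τ₂ ∧ (∀ x ∈ τ₁, x ∈ E) ∧ (∀ x ∈ τ₂, x ∈ E) ∧
    (τ₁.map w).sum + (τ₂.map w).sum ≤ (π₁.map w).sum + (π₂.map w).sum ∧
    ∀ x ∈ τ₁, x ∈ τ₂ → x ∈ π₁ ∧ x ∈ π₂ ∧ x ≠ e

variable {E : Set (V × V)} {w : V × V → ℝ} {s t : V} {e : V × V}

theorem CanShedLink.symm {π₁ π₂ : List (V × V)} (h : CanShedLink E w s t e π₁ π₂) :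
    CanShedLink E w s t e π₂ π₁ := by
  obtain ⟨τ₁, τ₂, h₁, h₂, h₁E, h₂E, hwt, hcommon⟩ := h
  refine ⟨τ₂, τ₁, h₂, h₁, h₂E, h₁E, by linarith, fun x hx₂ hx₁ => ?_⟩
  obtain ⟨hx₁', hx₂', hxe⟩ := hcommon x hx₁ hx₂
  exact ⟨hx₂', hx₁', hxe⟩

theorem CanShedLink.of_sublist {ρ₁ ρ₂ π₁ π₂ : List (V × V)} (h : CanShedLink E w s t e ρ₁ ρ₂)
    (hw : ∀ x, 0 ≤ w x) (h₁ : ρ₁.Sublist π₁) (h₂ : ρ₂.Sublist π₂) :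
    CanShedLink E w s t e π₁ π₂ := by
  obtain ⟨τ₁, τ₂, hτ₁, hτ₂, hτ₁E, hτ₂E, hwt, hcommon⟩ := h
  have hwt₁ := (h₁.map w).sum_le_sum (List.forall_mem_map.2 fun x _ => hw x)
  have hwt₂ := (h₂.map w).sum_le_sum (List.forall_mem_map.2 fun x _ => hw x)
  refine ⟨τ₁, τ₂, hτ₁, hτ₂, hτ₁E, hτ₂E, by linarith, fun x hx₁ hx₂ => ?_⟩
  obtain ⟨hx₁', hx₂', hxe⟩ := hcommon x hx₁ hx₂
  exact ⟨h₁.subset hx₁', h₂.subset hx₂', hxe⟩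

theorem canShedLink_self {π₁ π₂ : List (V × V)} (h₁ : IsPathFrom s t π₁) (h₂ : IsPathFrom s t π₂)
    (h₁E : ∀ x ∈ π₁, x ∈ E) (h₂E : ∀ x ∈ π₂, x ∈ E) (he : ¬(e ∈ π₁ ∧ e ∈ π₂)) :
    CanShedLink E w s t e π₁ π₂ :=
  ⟨π₁, π₂, h₁, h₂, h₁E, h₂E, le_rfl,
    fun x hx₁ hx₂ => ⟨hx₁, hx₂, by rintro rfl; exact he ⟨hx₁, hx₂⟩⟩⟩

theorem exists_balanced_infix (e : V × V) (L₁ R₁ L₂ R₂ : List (V × V)) {σ : List (V × V)}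
    (hσ : IsPathFrom s t σ) :
    ∃ S M T a b, σ = S ++ M ++ T ∧ IsPathFrom s a S ∧ IsPathFrom b t T ∧
      (∀ x ∈ M, x ∈ L₁ ++ e :: R₁ ↔ x ∈ L₂ ++ e :: R₂) ∧
      ((a = s ∨ ∃ y ∈ L₁, y.2 = a) ∨ (a = s ∨ ∃ y ∈ L₂, y.2 = a)) ∧
      ((b = t ∨ ∃ z ∈ R₁, z.1 = b) ∨ (b = t ∨ ∃ z ∈ R₂, z.1 = b)) := by
  let Unbalanced := fun x => ¬(x ∈ L₁ ++ e :: R₁ ↔ x ∈ L₂ ++ e :: R₂)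
  obtain ⟨L, T, rfl, hL, hT⟩ :=
    List.exists_eq_append_of_first (fun x => Unbalanced x ∧ (x ∈ R₁ ∨ x ∈ R₂)) σ
  obtain ⟨S, M, rfl, hM, hS⟩ := List.exists_eq_append_of_last Unbalanced L
  obtain ⟨b, hSM, hT'⟩ := isPathFrom_append.1 hσ
  obtain ⟨a, hS', -⟩ := isPathFrom_append.1 hSM
  refine ⟨S, M, T, a, b, rfl, hS', hT', fun x hx => not_not.1 (hM x hx), ?_, ?_⟩
  · rcases hS with rfl | ⟨S', y, rfl, hy⟩
    · exact .inl (.inl (isPathFrom_nil.1 hS').symm)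
    · have hya := (isPathFrom_append_cons.1 hS').2
      have hy' := hL y (by simp)
      -- unbalanced, so `y ≠ e`; on neither `Rᵢ`, since `T` starts at the first such edge
      have hyL : y ∈ L₁ ∨ y ∈ L₂ := by
        simp only [Unbalanced, List.mem_append, List.mem_cons] at hy hy'
        tauto
      rcases hyL with hyL | hyL
      exacts [.inl (.inr ⟨y, hyL, hya⟩), .inr (.inr ⟨y, hyL, hya⟩)]
  · rcases hT with rfl | ⟨z, T, rfl, -, hzR | hzR⟩
    · exact .inl (.inl hT')
    · exact .inl (.inr ⟨z, hzR, (isPathFrom_cons.1 hT').1⟩)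
    · exact .inr (.inr ⟨z, hzR, (isPathFrom_cons.1 hT').1⟩)

theorem canShedLink_of_exchange {a b : V} {L₁ R₁ L₂ R₂ M Rp Rq : List (V × V)}
    (h₁ : IsPathFrom s t (L₁ ++ e :: R₁)) (h₂ : IsPathFrom s t (L₂ ++ e :: R₂))
    (h₁E : ∀ x ∈ L₁ ++ e :: R₁, x ∈ E) (h₂E : ∀ x ∈ L₂ ++ e :: R₂, x ∈ E)
    (hnd₁ : (L₁ ++ e :: R₁).Nodup) (hnd₂ : (L₂ ++ e :: R₂).Nodup)
    (hM : IsShortestPath E w a b M) (heM : e ∉ M)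
    (hbal : ∀ x ∈ M, x ∈ L₁ ++ e :: R₁ ↔ x ∈ L₂ ++ e :: R₂)
    (hR : Rp = R₁ ∧ Rq = R₂ ∨ Rp = R₂ ∧ Rq = R₁)
    (ha : a = s ∨ ∃ y ∈ L₁, y.2 = a) (hb : b = t ∨ ∃ z ∈ Rp, z.1 = b) :
    CanShedLink E w s t e (L₁ ++ e :: R₁) (L₂ ++ e :: R₂) := by
  obtain ⟨hL₁, hR₁⟩ := isPathFrom_append_cons.1 h₁
  obtain ⟨hL₂, hR₂⟩ := isPathFrom_append_cons.1 h₂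
  have hRp : IsPathFrom e.2 t Rp ∧ ∀ x ∈ Rp, x ∈ E := by
    rcases hR with ⟨rfl, -⟩ | ⟨rfl, -⟩
    exacts [⟨hR₁, fun x hx => h₁E x (by simp [hx])⟩, ⟨hR₂, fun x hx => h₂E x (by simp [hx])⟩]
  have hRq : IsPathFrom e.2 t Rq ∧ ∀ x ∈ Rq, x ∈ E := by
    rcases hR with ⟨-, rfl⟩ | ⟨-, rfl⟩
    exacts [⟨hR₂, fun x hx => h₂E x (by simp [hx])⟩, ⟨hR₁, fun x hx => h₁E x (by simp [hx])⟩]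
  obtain ⟨P, Q₀, rfl, hP⟩ := hL₁.exists_prefix_to ha
  obtain ⟨Q₁, R, rfl, hR'⟩ := hRp.1.exists_suffix_from hb
  have hdetour : IsPathFrom a b (Q₀ ++ e :: Q₁) :=
    isPathFrom_append_cons.2 ⟨hL₁.of_append_right hP, hRp.1.of_append_left hR'⟩
  have hdetourE : ∀ x ∈ Q₀ ++ e :: Q₁, x ∈ E := by
    intro x hx
    simp only [List.mem_append, List.mem_cons] at hx
    rcases hx with hx | rfl | hx
    exacts [h₁E x (by simp [hx]), h₁E x (by simp), hRp.2 x (by simp [hx])]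
  have hMle := hM.2.2 _ hdetour hdetourE
  refine ⟨P ++ M ++ R, L₂ ++ e :: Rq,
    isPathFrom_append.2 ⟨b, isPathFrom_append.2 ⟨a, hP, hM.1⟩, hR'⟩,
    isPathFrom_append_cons.2 ⟨hL₂, hRq.1⟩, ?_, ?_, ?_,
    List.common_of_exchange hnd₁ hnd₂ heM hbal hR (List.subset_append_left P Q₀)
      (List.subset_append_right Q₁ R)⟩
  · intro x hx
    simp only [List.mem_append] at hx
    rcases hx with (hx | hx) | hx
    exacts [h₁E x (by simp [hx]), hM.2.1 x hx, hRp.2 x (by simp [hx])]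
  · intro x hx
    simp only [List.mem_append, List.mem_cons] at hx
    rcases hx with hx | rfl | hx
    exacts [h₂E x (by simp [hx]), h₂E x (by simp), hRq.2 x hx]
  · rcases hR with ⟨hQR, rfl⟩ | ⟨hQR, rfl⟩ <;>
      simp only [← hQR, List.map_append, List.map_cons, List.sum_append, List.sum_cons]
        at hMle ⊢ <;>
      linarith

theorem canShedLink_of_nodup {σ ρ₁ ρ₂ : List (V × V)} (hσ : IsShortestPath E w s t σ) (heσ : e ∉ σ)
    (h₁ : IsPathFrom s t ρ₁) (h₂ : IsPathFrom s t ρ₂)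
    (h₁E : ∀ x ∈ ρ₁, x ∈ E) (h₂E : ∀ x ∈ ρ₂, x ∈ E) (hnd₁ : ρ₁.Nodup) (hnd₂ : ρ₂.Nodup)
    (he₁ : e ∈ ρ₁) (he₂ : e ∈ ρ₂) : CanShedLink E w s t e ρ₁ ρ₂ := by
  obtain ⟨L₁, R₁, rfl⟩ := List.append_of_mem he₁
  obtain ⟨L₂, R₂, rfl⟩ := List.append_of_mem he₂
  obtain ⟨S, M, T, a, b, rfl, hS, hT, hbal, ha, hb⟩ := exists_balanced_infix e L₁ R₁ L₂ R₂ hσ.1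
  have hM := hσ.infix hS hT
  have heM : e ∉ M := fun h => heσ (by simp [h])
  have hbal' : ∀ x ∈ M, x ∈ L₂ ++ e :: R₂ ↔ x ∈ L₁ ++ e :: R₁ := fun x hx => (hbal x hx).symm
  rcases ha with ha | ha <;> rcases hb with hb | hb
  · exact canShedLink_of_exchange h₁ h₂ h₁E h₂E hnd₁ hnd₂ hM heM hbal (.inl ⟨rfl, rfl⟩) ha hb
  · exact canShedLink_of_exchange h₁ h₂ h₁E h₂E hnd₁ hnd₂ hM heM hbal (.inr ⟨rfl, rfl⟩) ha hb
  · exact (canShedLink_of_exchange h₂ h₁ h₂E h₁E hnd₂ hnd₁ hM heM hbal'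
      (.inr ⟨rfl, rfl⟩) ha hb).symm
  · exact (canShedLink_of_exchange h₂ h₁ h₂E h₁E hnd₂ hnd₁ hM heM hbal'
      (.inl ⟨rfl, rfl⟩) ha hb).symm

theorem canShedLink {σ π₁ π₂ : List (V × V)} (hw : ∀ x, 0 ≤ w x)
    (hσ : IsShortestPath E w s t σ) (heσ : e ∉ σ)
    (h₁ : IsPathFrom s t π₁) (h₂ : IsPathFrom s t π₂)
    (h₁E : ∀ x ∈ π₁, x ∈ E) (h₂E : ∀ x ∈ π₂, x ∈ E) : CanShedLink E w s t e π₁ π₂ := by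
  obtain ⟨ρ₁, hsub₁, hnd₁, hρ₁⟩ := h₁.exists_nodup_sublist
  obtain ⟨ρ₂, hsub₂, hnd₂, hρ₂⟩ := h₂.exists_nodup_sublist
  have hρ₁E : ∀ x ∈ ρ₁, x ∈ E := fun x hx => h₁E x (hsub₁.subset hx)
  have hρ₂E : ∀ x ∈ ρ₂, x ∈ E := fun x hx => h₂E x (hsub₂.subset hx)
  refine CanShedLink.of_sublist ?_ hw hsub₁ hsub₂
  by_cases he : e ∈ ρ₁ ∧ e ∈ ρ₂
  · exact canShedLink_of_nodup hσ heσ hρ₁ hρ₂ hρ₁E hρ₂E hnd₁ hnd₂ he.1 he.2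
  · exact canShedLink_self hρ₁ hρ₂ hρ₁E hρ₂E he

end Paths

theorem Finset.prod_lt_prod_of_subset_erase {ι R : Type*} [DecidableEq ι] [CommSemiring R]
    [PartialOrder R] [IsStrictOrderedRing R] {f : ι → R} {S K : Finset ι} {i : ι}
    (hK : K ⊆ S.erase i) (hi : i ∈ S) (hf₀ : ∀ j ∈ S, 0 < f j) (hf₁ : ∀ j ∈ S, f j ≤ 1)
    (hfi : f i < 1) : ∏ j ∈ S, f j < ∏ j ∈ K, f j := by
  have hKS : K ⊆ S := hK.trans (S.erase_subset i)
  calc ∏ j ∈ S, f j = f i * ∏ j ∈ S.erase i, f j := (S.mul_prod_erase f hi).symm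
    _ ≤ f i * ∏ j ∈ K, f j := mul_le_mul_of_nonneg_left
      (Finset.prod_le_prod_of_subset_of_le_one hK (fun j hj => (hf₀ j (S.erase_subset i hj)).le)
        (fun j hj _ => hf₁ j (S.erase_subset i hj))) (hf₀ i hi).le
    _ < ∏ j ∈ K, f j := mul_lt_of_lt_one_left (Finset.prod_pos fun j hj => hf₀ j (hKS hj)) hfi

/-- If `(π₁, π₂)` optimally solves the CT-Constrained QoS Max-Survivability
problem with QoS bound `B` (it is feasible and its survivability level
`∏_{e ∈ π₁ ∩ π₂} (1 - p e)` is maximal among feasible connections), then every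
critical link of `(π₁, π₂)` lies on every weight-shortest path from `s` to `t`. -/
theorem ct_cqms_critical_links_in_all_shortest_paths {V : Type*} [DecidableEq V]
    (E : Finset (V × V)) (w p : V × V → ℝ)
    (hw : ∀ e, 0 < w e) (hp : ∀ e, 0 < p e ∧ p e < 1)
    (s t : V) (B : ℝ) (π₁ π₂ : List (V × V))
    (h₁ : IsPathFrom s t π₁) (h₂ : IsPathFrom s t π₂)
    (h₁E : ∀ e ∈ π₁, e ∈ E) (h₂E : ∀ e ∈ π₂, e ∈ E)
    (hB : (π₁.map w).sum + (π₂.map w).sum ≤ B)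
    (hopt : ∀ τ₁ τ₂ : List (V × V), IsPathFrom s t τ₁ → IsPathFrom s t τ₂ →
      (∀ e ∈ τ₁, e ∈ E) → (∀ e ∈ τ₂, e ∈ E) →
      (τ₁.map w).sum + (τ₂.map w).sum ≤ B →
      ∏ e ∈ τ₁.toFinset ∩ τ₂.toFinset, (1 - p e) ≤
        ∏ e ∈ π₁.toFinset ∩ π₂.toFinset, (1 - p e)) :
    ∀ e ∈ π₁.toFinset ∩ π₂.toFinset,
      ∀ σ : List (V × V), IsPathFrom s t σ → (∀ e' ∈ σ, e' ∈ E) →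
        (∀ τ : List (V × V), IsPathFrom s t τ → (∀ e' ∈ τ, e' ∈ E) →
          (σ.map w).sum ≤ (τ.map w).sum) →
        e ∈ σ := by
  intro e he σ hσ hσE hσmin
  by_contra heσ
  obtain ⟨τ₁, τ₂, hτ₁, hτ₂, hτ₁E, hτ₂E, hwt, hcommon⟩ :=
    canShedLink (E := (E : Set (V × V))) (fun x => (hw x).le) ⟨hσ, hσE, hσmin⟩ heσ h₁ h₂ h₁E h₂E
  have hsub : τ₁.toFinset ∩ τ₂.toFinset ⊆ (π₁.toFinset ∩ π₂.toFinset).erase e := by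
    intro x hx
    simp only [Finset.mem_inter, List.mem_toFinset] at hx
    obtain ⟨hx₁, hx₂, hxe⟩ := hcommon x hx.1 hx.2
    simp [hx₁, hx₂, hxe]
  exact (hopt τ₁ τ₂ hτ₁ hτ₂ hτ₁E hτ₂E (hwt.trans hB)).not_gt <|
    Finset.prod_lt_prod_of_subset_erase hsub he (fun j _ => by linarith [hp j])
      (fun j _ => by linarith [hp j]) (by linarith [hp e])
end

section
/- Approximation transfer: Let S_min ∈ (0,1), ε > 0, and let S_opt, S_algo ∈ [S_min, 1] with S_opt ≥ S_algo. If (−ln S_algo)/(−ln S_opt) ≤ 1 + (−ln(1+ε))/(ln S_min) whenever S_opt < 1, and S_algo = S_opt whenever S_opt = 1, then S_opt/S_algo ≤ 1 + ε. -/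
/-- Approximation transfer: let `S_min ∈ (0,1)`, `ε > 0`, and
`S_opt, S_algo ∈ [S_min, 1]` with `S_opt ≥ S_algo`.  If
`(-ln S_algo)/(-ln S_opt) ≤ 1 + (-ln(1+ε))/(ln S_min)` whenever `S_opt < 1`,
and `S_algo = S_opt` whenever `S_opt = 1`, then `S_opt / S_algo ≤ 1 + ε`. -/
theorem approximation_transfer (Smin ε Sopt Salgo : ℝ)
    (hSmin₀ : 0 < Smin) (hSmin₁ : Smin < 1) (hε : 0 < ε)
    (hlo : Smin ≤ Salgo) (hle : Salgo ≤ Sopt) (hhi : Sopt ≤ 1)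
    (hrel : Sopt < 1 →
      (-Real.log Salgo) / (-Real.log Sopt) ≤
        1 + (-Real.log (1 + ε)) / (Real.log Smin))
    (heq : Sopt = 1 → Salgo = Sopt) :
    Sopt / Salgo ≤ 1 + ε := by
  have hSalgo₀ : 0 < Salgo := lt_of_lt_of_le hSmin₀ hlo
  have hSopt₀ : 0 < Sopt := lt_of_lt_of_le hSalgo₀ hle
  rcases eq_or_lt_of_le hhi with h1 | h1
  · rw [heq h1, h1, div_one]; linarith
  · have hb : 0 < -Real.log Sopt := by
      have := Real.log_neg hSopt₀ h1; linarith
    have hbm : -Real.log Sopt ≤ -Real.log Smin := by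
      have := Real.log_le_log hSmin₀ (le_trans hlo hle); linarith
    have hLm : 0 < -Real.log Smin := by
      have := Real.log_neg hSmin₀ hSmin₁; linarith
    have hL1 : 0 < Real.log (1 + ε) := Real.log_pos (by linarith)
    have hL : (-Real.log (1 + ε)) / (Real.log Smin)
        = Real.log (1 + ε) / (-Real.log Smin) := by
      rw [← neg_div_neg_eq, neg_neg]
    have key := hrel h1
    rw [hL, div_le_iff₀ hb] at key
    have h2 : (-Real.log Sopt) * (Real.log (1 + ε) / (-Real.log Smin))
        ≤ Real.log (1 + ε) := by
      rw [mul_div_assoc', div_le_iff₀ hLm]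
      have : (-Real.log Sopt) * Real.log (1 + ε)
          ≤ (-Real.log Smin) * Real.log (1 + ε) :=
        mul_le_mul_of_nonneg_right hbm hL1.le
      linarith [mul_comm (Real.log (1 + ε)) (-Real.log Smin)]
    have h3 : Real.log Sopt - Real.log Salgo ≤ Real.log (1 + ε) := by
      have : -Real.log Salgo ≤ (1 + Real.log (1 + ε) / (-Real.log Smin))
          * (-Real.log Sopt) := key
      nlinarith
    have h4 : Real.log (Sopt / Salgo) ≤ Real.log (1 + ε) := by
      rw [Real.log_div (ne_of_gt hSopt₀) (ne_of_gt hSalgo₀)]; exact h3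
    have := (Real.log_le_log_iff (div_pos hSopt₀ hSalgo₀) (by linarith)).mp h4
    exact this
end
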